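/- arXiv:2012.09482 — 2 statements merged into one kernel-verified Lean document; each statement's English description precedes it below -/
import Mathlib

section
/- Let (X,d) be a compact metric space, T: X → X continuous, and Z ⊆ X a nonempty set whose closure contains the non-wandering set Ω(T,X). Then the upper capacity topological entropy of T on Z equals the topological entropy of (X,T). -/
/-!
Fix `ε > 0` and `m ≥ 1`, and let `F` be a maximal `(m, ε/4)`-separated subset of `Z`. The Bowen
balls of length `m` and radius `ε/2` around `F` cover `closure Z`, so their union `U` is an open
neighbourhood of the non-wandering set, and the compact set `X \ U` is covered by `N` wandering
open sets of diameter at most `ε`. An orbit meets each wandering set at most once, so it spends at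
most `N` steps outside `U`. Following an orbit by blocks (a Bowen ball of length `m` while in `U`,
a single step in a wandering set otherwise) covers `X` by at most
`s_m(Z, ε/4)^(n/m+1) (N n + 1)^(N+1)` sets of `(n, ε)`-diameter at most `ε`. Hence
`limsup (1/n) log s_n(X, ε) ≤ (1/m) log s_m(Z, ε/4)` for every `m`, which bounds the entropy on
`X` by the upper capacity entropy on `Z`; the other inequality is monotonicity.
-/

open Filter MeasureTheory Topology
open scoped ENNReal

variable {X : Type*} [MetricSpace X]


/-- The (open) Bowen ball of length `n` and radius `ε`. -/
def bowenBall (T : X → X) (x : X) (n : ℕ) (ε : ℝ) : Set X :=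
  {y | ∀ i < n, dist (T^[i] x) (T^[i] y) < ε}

/-- The closed Bowen ball of length `n` and radius `ε`. -/
def closedBowenBall (T : X → X) (x : X) (n : ℕ) (ε : ℝ) : Set X :=
  {y | ∀ i < n, dist (T^[i] x) (T^[i] y) ≤ ε}

/-- `E` is an `(n,ε)`-separated set for `T`. -/
def IsSep (T : X → X) (n : ℕ) (ε : ℝ) (E : Finset X) : Prop :=
  ∀ x ∈ E, ∀ y ∈ E, x ≠ y → ∃ i < n, ε < dist (T^[i] x) (T^[i] y)

/-- Maximal cardinality of an `(n,ε)`-separated subset of `Z`. -/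
noncomputable def sepNum (T : X → X) (Z : Set X) (n : ℕ) (ε : ℝ) : ℕ :=
  sSup {k | ∃ E : Finset X, ↑E ⊆ Z ∧ IsSep T n ε E ∧ E.card = k}

/-- Upper capacity topological entropy of `T` on `Z`. -/
noncomputable def ucEntropy (T : X → X) (Z : Set X) : EReal :=
  ⨆ (ε : ℝ) (_ : 0 < ε),
    Filter.limsup (fun n : ℕ => ((Real.log (sepNum T Z n ε) / n : ℝ) : EReal)) Filter.atTop

/-- The Carathéodory sum `M^s_{N,ε}(Z)` for Bowen entropy. -/
noncomputable def bowenM (T : X → X) (Z : Set X) (s : ℝ) (N : ℕ) (ε : ℝ) : ℝ≥0∞ :=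
  ⨅ (c : Set (X × ℕ)) (_ : c.Countable ∧ (∀ p ∈ c, N ≤ p.2) ∧
      Z ⊆ ⋃ p ∈ c, bowenBall T p.1 p.2 ε),
    ∑' p : c, ENNReal.ofReal (Real.exp (-s * ((p : X × ℕ).2 : ℝ)))

/-- `M^s_ε(Z) = lim_N M^s_{N,ε}(Z)` (the limit is the supremum by monotonicity). -/
noncomputable def bowenMs (T : X → X) (Z : Set X) (s : ℝ) (ε : ℝ) : ℝ≥0∞ :=
  ⨆ N : ℕ, bowenM T Z s N ε

/-- Bowen topological entropy of `T` on `Z`. -/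
noncomputable def bowenEntropy (T : X → X) (Z : Set X) : EReal :=
  ⨆ (ε : ℝ) (_ : 0 < ε), sInf ((fun s : ℝ => (s : EReal)) '' {s : ℝ | bowenMs T Z s ε = 0})

/-- The packing pre-sum `P^s_{N,ε}(Z)`, a supremum over disjoint families of closed
Bowen balls with centers in `Z` and lengths at least `N`. -/
noncomputable def packP (T : X → X) (Z : Set X) (s : ℝ) (N : ℕ) (ε : ℝ) : ℝ≥0∞ :=
  ⨆ (c : Set (X × ℕ)) (_ : c.Countable ∧ (∀ p ∈ c, p.1 ∈ Z ∧ N ≤ p.2) ∧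
      c.PairwiseDisjoint (fun p => closedBowenBall T p.1 p.2 ε)),
    ∑' p : c, ENNReal.ofReal (Real.exp (-s * ((p : X × ℕ).2 : ℝ)))

/-- `P^s_ε(Z) = lim_N P^s_{N,ε}(Z)` (the limit is the infimum by monotonicity). -/
noncomputable def packPre (T : X → X) (Z : Set X) (s : ℝ) (ε : ℝ) : ℝ≥0∞ :=
  ⨅ N : ℕ, packP T Z s N ε

/-- The packing outer quantity `𝒫^s_ε(Z)`. -/
noncomputable def packM (T : X → X) (Z : Set X) (s : ℝ) (ε : ℝ) : ℝ≥0∞ :=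
  ⨅ (c : ℕ → Set X) (_ : Z ⊆ ⋃ i, c i), ∑' i, packPre T (c i) s ε

/-- Packing topological entropy of `T` on `Z`. -/
noncomputable def packEntropy (T : X → X) (Z : Set X) : EReal :=
  ⨆ (ε : ℝ) (_ : 0 < ε), sInf ((fun s : ℝ => (s : EReal)) '' {s : ℝ | packM T Z s ε = 0})

open Set

namespace Real

lemma log_natCast_le_log_natCast {a b : ℕ} (h : a ≤ b) : log a ≤ log b := by
  rcases a.eq_zero_or_pos with rfl | ha
  · simpa using log_natCast_nonneg b
  · exact log_le_log (by positivity) (by exact_mod_cast h)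

lemma tendsto_log_natCast_div_atTop : Tendsto (fun n : ℕ => log n / n) atTop (𝓝 0) := by
  simpa [Function.comp_def] using (tendsto_pow_log_div_mul_add_atTop 1 0 1 one_ne_zero).comp
    tendsto_natCast_atTop_atTop

end Real

section Wandering

variable {α : Type*} {T : α → α} {K V W : Set α}

def nonwanderingSet [TopologicalSpace α] (T : α → α) : Set α :=
  {x | ∀ U : Set α, IsOpen U → x ∈ U → ∃ k : ℕ, 1 ≤ k ∧ ∃ y ∈ U, T^[k] y ∈ U}

def IsWandering (T : α → α) (W : Set α) : Prop :=
  ∀ k, 1 ≤ k → ∀ y ∈ W, T^[k] y ∉ W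

lemma IsWandering.mono (hW : IsWandering T W) (hVW : V ⊆ W) : IsWandering T V :=
  fun k hk y hy hTy => hW k hk y (hVW hy) (hVW hTy)

lemma exists_isOpen_isWandering_of_notMem_nonwanderingSet [TopologicalSpace α] {x : α}
    (hx : x ∉ nonwanderingSet T) : ∃ W, IsOpen W ∧ x ∈ W ∧ IsWandering T W := by
  by_contra! h
  exact hx fun W hWo hxW => by simpa [IsWandering] using h W hWo hxW

noncomputable def visitCount (T : α → α) (K : Set α) (x : α) : ℕ∞ :=
  {t : ℕ | T^[t] x ∈ K}.encard

lemma visitCount_iterate_le (m : ℕ) (x : α) : visitCount T K (T^[m] x) ≤ visitCount T K x :=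
  encard_le_encard_of_injOn (f := (· + m))
    (fun t ht => by simpa [Function.iterate_add_apply] using ht) (add_left_injective m).injOn

lemma visitCount_apply_add_one_le {x : α} (hx : x ∈ K) :
    visitCount T K (T x) + 1 ≤ visitCount T K x := by
  calc visitCount T K (T x) + 1 = (insert 0 ((· + 1) '' {t | T^[t] (T x) ∈ K})).encard := by
        rw [encard_insert_of_notMem (by simp), (add_left_injective 1).encard_image, visitCount]
    _ ≤ visitCount T K x := encard_le_encard ?_
  rintro _ (rfl | ⟨t, ht, rfl⟩)
  · simpa using hx
  · simpa [Function.iterate_succ_apply] using ht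

lemma IsWandering.visitCount_le_one (hW : IsWandering T W) (x : α) : visitCount T W x ≤ 1 := by
  have key : ∀ a b, a < b → T^[a] x ∈ W → T^[b] x ∉ W := fun a b hab ha hb =>
    hW (b - a) (by omega) _ ha (by rwa [← Function.iterate_add_apply, Nat.sub_add_cancel hab.le])
  refine encard_le_one_iff.2 fun a b ha hb => ?_
  by_contra hne
  rcases Nat.lt_or_gt_of_ne hne with hab | hab
  exacts [key a b hab ha hb, key b a hab hb ha]

lemma visitCount_le_card {𝒲 : Finset (Set α)} (hK : K ⊆ ⋃₀ ↑𝒲)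
    (h𝒲 : ∀ W ∈ 𝒲, IsWandering T W) (x : α) : visitCount T K x ≤ 𝒲.card :=
  calc visitCount T K x ≤ (⋃ W ∈ 𝒲, {t : ℕ | T^[t] x ∈ W}).encard :=
        encard_le_encard fun t ht => by simpa using hK ht
    _ ≤ ∑ W ∈ 𝒲, visitCount T W x := Finset.set_encard_biUnion_le _ _
    _ ≤ ∑ _W ∈ 𝒲, 1 := Finset.sum_le_sum fun W hW => (h𝒲 W hW).visitCount_le_one x
    _ = 𝒲.card := by simp

end Wandering

section CoverJoin

variable {α : Type*} {T : α → α} {m : ℕ} {𝒜 𝒞 : Finset (Set α)}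

open Classical in
noncomputable def coverJoin (T : α → α) (m : ℕ) (𝒜 𝒞 : Finset (Set α)) : Finset (Set α) :=
  (𝒜 ×ˢ 𝒞).image fun p => p.1 ∩ T^[m] ⁻¹' p.2

lemma card_coverJoin_le :
    (coverJoin T m 𝒜 𝒞).card ≤ 𝒜.card * 𝒞.card :=
  Finset.card_image_le.trans_eq (Finset.card_product _ _)

lemma mem_sUnion_coverJoin {x : α} (hxA : x ∈ ⋃₀ ↑𝒜) (hxC : T^[m] x ∈ ⋃₀ ↑𝒞) :
    x ∈ ⋃₀ ↑(coverJoin T m 𝒜 𝒞) := by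
  obtain ⟨A, hA, hxA⟩ := hxA
  obtain ⟨C, hC, hxC⟩ := hxC
  exact ⟨_, Finset.mem_coe.2 (Finset.mem_image.2 ⟨(A, C), Finset.mem_product.2 ⟨hA, hC⟩, rfl⟩),
    hxA, hxC⟩

end CoverJoin

section Bowen

variable {T : X → X} {m n : ℕ} {ε : ℝ} {x : X} {A C D : Set X}

lemma mem_bowenBall_self (hε : 0 < ε) : x ∈ bowenBall T x n ε :=
  fun i _ => by simpa using hε

lemma isOpen_bowenBall (hT : Continuous T) (x : X) (n : ℕ) (ε : ℝ) :
    IsOpen (bowenBall T x n ε) := by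
  have : bowenBall T x n ε = ⋂ i ∈ Iio n, {y | dist (T^[i] x) (T^[i] y) < ε} := by
    ext; simp [bowenBall]
  rw [this]
  exact (finite_Iio n).isOpen_biInter fun i _ =>
    isOpen_lt (continuous_const.dist (hT.iterate i)) continuous_const

def IsBowenSmall (T : X → X) (n : ℕ) (ε : ℝ) (C : Set X) : Prop :=
  ∀ a ∈ C, ∀ b ∈ C, ∀ i < n, dist (T^[i] a) (T^[i] b) ≤ ε

lemma IsBowenSmall.subset (hC : IsBowenSmall T n ε C) (hDC : D ⊆ C) : IsBowenSmall T n ε D :=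
  fun a ha b hb => hC a (hDC ha) b (hDC hb)

lemma IsBowenSmall.mono_length (hC : IsBowenSmall T n ε C) (hmn : m ≤ n) :
    IsBowenSmall T m ε C :=
  fun a ha b hb i hi => hC a ha b hb i (hi.trans_le hmn)

lemma isBowenSmall_zero : IsBowenSmall T 0 ε C :=
  fun _ _ _ _ i hi => absurd hi i.not_lt_zero

lemma IsBowenSmall.inter_preimage_iterate (hA : IsBowenSmall T m ε A)
    (hC : IsBowenSmall T n ε C) : IsBowenSmall T (m + n) ε (A ∩ T^[m] ⁻¹' C) := by
  rintro a ⟨haA, haC⟩ b ⟨hbA, hbC⟩ i hi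
  rcases lt_or_ge i m with him | him
  · exact hA a haA b hbA i him
  · obtain ⟨j, rfl⟩ := Nat.exists_eq_add_of_le him
    rw [add_comm m j, Function.iterate_add_apply, Function.iterate_add_apply]
    exact hC _ haC _ hbC j (by omega)

lemma isBowenSmall_bowenBall (T : X → X) (x : X) (n : ℕ) (ε : ℝ) :
    IsBowenSmall T n ε (bowenBall T x n (ε / 2)) := fun a ha b hb i hi => by
  linarith [dist_triangle_left (T^[i] a) (T^[i] b) (T^[i] x), ha i hi, hb i hi]

lemma IsSep.card_le_of_isBowenSmall {E : Finset X} (hE : IsSep T n ε E) {𝒞 : Finset (Set X)}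
    (hE𝒞 : (E : Set X) ⊆ ⋃₀ ↑𝒞) (h𝒞 : ∀ C ∈ 𝒞, IsBowenSmall T n ε C) : E.card ≤ 𝒞.card := by
  choose! f hf𝒞 hf using fun x (hx : x ∈ E) => mem_sUnion.1 (hE𝒞 hx)
  refine Finset.card_le_card_of_injOn f (fun x hx => hf𝒞 x hx) fun x hx y hy hxy => ?_
  by_contra hne
  obtain ⟨i, hi, hlt⟩ := hE x hx y hy hne
  exact hlt.not_ge (h𝒞 _ (hf𝒞 x hx) x (hf x hx) y (hxy ▸ hf y hy) i hi)

lemma IsSep.insert [DecidableEq X] {E : Finset X} (hE : IsSep T n ε E) {z : X}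
    (hz : ∀ y ∈ E, ∃ i < n, ε < dist (T^[i] y) (T^[i] z)) : IsSep T n ε (insert z E) := by
  intro x hx y hy hxy
  rw [Finset.mem_insert] at hx hy
  rcases hx with rfl | hx <;> rcases hy with rfl | hy
  · exact absurd rfl hxy
  · simpa only [dist_comm] using hz y hy
  · exact hz x hx
  · exact hE x hx y hy hxy

lemma isBowenSmall_of_mem_coverJoin {𝒜 𝒞 : Finset (Set X)}
    (h𝒜 : ∀ A ∈ 𝒜, IsBowenSmall T m ε A) (h𝒞 : ∀ C ∈ 𝒞, IsBowenSmall T n ε C) :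
    ∀ B ∈ coverJoin T m 𝒜 𝒞, IsBowenSmall T (m + n) ε B := by
  classical
  simp only [coverJoin, Finset.mem_image, Finset.mem_product]
  rintro _ ⟨⟨A, C⟩, ⟨hA, hC⟩, rfl⟩
  exact (h𝒜 A hA).inter_preimage_iterate (h𝒞 C hC)

lemma exists_isWandering_cover (hT : Continuous T) (hε : 0 < ε) {K : Set X} (hK : IsCompact K)
    (hKΩ : Disjoint K (nonwanderingSet T)) :
    ∃ 𝒲 : Finset (Set X), K ⊆ ⋃₀ ↑𝒲 ∧ ∀ W ∈ 𝒲, IsWandering T W ∧ IsBowenSmall T 1 ε W := by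
  classical
  have hloc : ∀ x ∈ K, ∃ W ∈ 𝓝 x, IsWandering T W ∧ IsBowenSmall T 1 ε W := fun x hx => by
    obtain ⟨V, hVo, hxV, hV⟩ :=
      exists_isOpen_isWandering_of_notMem_nonwanderingSet (disjoint_left.1 hKΩ hx)
    exact ⟨V ∩ bowenBall T x 1 (ε / 2), inter_mem (hVo.mem_nhds hxV)
      ((isOpen_bowenBall hT x 1 _).mem_nhds (mem_bowenBall_self (by linarith))),
      hV.mono inter_subset_left, (isBowenSmall_bowenBall T x 1 ε).subset inter_subset_right⟩
  choose! W hWx hW using hloc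
  obtain ⟨t, htK, hKt⟩ := hK.elim_nhds_subcover W hWx
  refine ⟨t.image W, by simpa using hKt, ?_⟩
  simp only [Finset.mem_image]
  rintro _ ⟨x, hx, rfl⟩
  exact hW x (htK x hx)

end Bowen

section Compact

variable [CompactSpace X] {T : X → X} {Z W : Set X} {m n : ℕ} {ε : ℝ}

lemma exists_isBowenSmall_cover (hT : Continuous T) (n : ℕ) (hε : 0 < ε) :
    ∃ 𝒞 : Finset (Set X), univ ⊆ ⋃₀ (𝒞 : Set (Set X)) ∧ ∀ C ∈ 𝒞, IsBowenSmall T n ε C := by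
  classical
  obtain ⟨t, ht⟩ := isCompact_univ.elim_finite_subcover (fun x => bowenBall T x n (ε / 2))
    (fun x => isOpen_bowenBall hT x n _) fun x _ =>
      mem_iUnion.2 ⟨x, mem_bowenBall_self (by linarith)⟩
  refine ⟨t.image fun x => bowenBall T x n (ε / 2), by simpa using ht, ?_⟩
  simp only [Finset.mem_image]
  rintro _ ⟨x, -, rfl⟩
  exact isBowenSmall_bowenBall T x n ε

lemma bddAbove_card_isSep (hT : Continuous T) (Z : Set X) (n : ℕ) (hε : 0 < ε) :
    BddAbove {k | ∃ E : Finset X, ↑E ⊆ Z ∧ IsSep T n ε E ∧ E.card = k} := by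
  obtain ⟨𝒞, h𝒞, hsmall⟩ := exists_isBowenSmall_cover hT n hε
  exact ⟨𝒞.card, by
    rintro _ ⟨E, -, hE, rfl⟩
    exact hE.card_le_of_isBowenSmall ((subset_univ _).trans h𝒞) hsmall⟩

lemma le_sepNum (hT : Continuous T) (hε : 0 < ε) {E : Finset X} (hEZ : ↑E ⊆ Z)
    (hE : IsSep T n ε E) : E.card ≤ sepNum T Z n ε :=
  le_csSup (bddAbove_card_isSep hT Z n hε) ⟨E, hEZ, hE, rfl⟩

lemma exists_isSep_card_eq_sepNum (hT : Continuous T) (Z : Set X) (n : ℕ) (hε : 0 < ε) :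
    ∃ E : Finset X, ↑E ⊆ Z ∧ IsSep T n ε E ∧ E.card = sepNum T Z n ε := by
  have hne : {k | ∃ E : Finset X, ↑E ⊆ Z ∧ IsSep T n ε E ∧ E.card = k}.Nonempty :=
    ⟨0, ∅, by simp, by simp [IsSep], rfl⟩
  exact Nat.sSup_mem hne (bddAbove_card_isSep hT Z n hε)

lemma sepNum_mono (hT : Continuous T) (hε : 0 < ε) (hZW : Z ⊆ W) :
    sepNum T Z n ε ≤ sepNum T W n ε := by
  obtain ⟨E, hEZ, hE, hcard⟩ := exists_isSep_card_eq_sepNum hT Z n hε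
  exact hcard ▸ le_sepNum hT hε (hEZ.trans hZW) hE

lemma sepNum_le_card_of_isBowenSmall (hT : Continuous T) (hε : 0 < ε) {𝒞 : Finset (Set X)}
    (hZ𝒞 : Z ⊆ ⋃₀ ↑𝒞) (h𝒞 : ∀ C ∈ 𝒞, IsBowenSmall T n ε C) :
    sepNum T Z n ε ≤ 𝒞.card := by
  obtain ⟨E, hEZ, hE, hcard⟩ := exists_isSep_card_eq_sepNum hT Z n hε
  exact hcard ▸ hE.card_le_of_isBowenSmall (hEZ.trans hZ𝒞) h𝒞

-- A separated set of maximal cardinality is spanning.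
lemma exists_spanning_finset (hT : Continuous T) (Z : Set X) (n : ℕ) (hε : 0 < ε) :
    ∃ F : Finset X, F.card = sepNum T Z n ε ∧
      ∀ z ∈ Z, ∃ y ∈ F, ∀ i < n, dist (T^[i] y) (T^[i] z) ≤ ε := by
  classical
  obtain ⟨F, hFZ, hF, hcard⟩ := exists_isSep_card_eq_sepNum hT Z n hε
  refine ⟨F, hcard, fun z hz => ?_⟩
  by_contra! hfar
  have hzF : z ∉ F := fun hzF => by
    obtain ⟨i, -, hi⟩ := hfar z hzF
    simp only [dist_self] at hi
    linarith
  have := le_sepNum hT hε (by simpa using insert_subset hz hFZ) (hF.insert hfar)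
  rw [Finset.card_insert_of_notMem hzF] at this
  omega

lemma sepNum_pos (hT : Continuous T) (hZ : Z.Nonempty) (hε : 0 < ε) : 0 < sepNum T Z n ε :=
  le_sepNum hT hε (E := {hZ.some}) (by simpa using hZ.some_mem) fun x hx y hy hxy =>
    absurd ((Finset.mem_singleton.1 hx).trans (Finset.mem_singleton.1 hy).symm) hxy

lemma ucEntropy_mono (hT : Continuous T) (hZW : Z ⊆ W) : ucEntropy T Z ≤ ucEntropy T W :=
  iSup₂_mono fun ε hε => limsup_le_limsup <| Eventually.of_forall fun n =>
    EReal.coe_le_coe_iff.2 <| div_le_div_of_nonneg_right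
      (Real.log_natCast_le_log_natCast (sepNum_mono hT hε hZW)) n.cast_nonneg

lemma exists_isBowenSmall_cover_closure (hT : Continuous T) (hZ : Z.Nonempty) (m : ℕ)
    (hε : 0 < ε) :
    ∃ 𝒜 : Finset (Set X), 𝒜.Nonempty ∧ 𝒜.card ≤ sepNum T Z m (ε / 4) ∧
      closure Z ⊆ ⋃₀ ↑𝒜 ∧ ∀ A ∈ 𝒜, IsOpen A ∧ IsBowenSmall T m ε A := by
  classical
  obtain ⟨F, hFcard, hF⟩ := exists_spanning_finset hT Z m (by linarith : 0 < ε / 4)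
  refine ⟨F.image fun y => bowenBall T y m (ε / 2), ?_, hFcard ▸ Finset.card_image_le, ?_, ?_⟩
  · obtain ⟨y, hy, -⟩ := hF _ hZ.some_mem
    exact ⟨_, Finset.mem_image_of_mem _ hy⟩
  · intro w hw
    obtain ⟨z, hzw, hzZ⟩ := mem_closure_iff.1 hw (bowenBall T w m (ε / 4))
      (isOpen_bowenBall hT w m _) (mem_bowenBall_self (by linarith))
    obtain ⟨y, hyF, hyz⟩ := hF z hzZ
    refine ⟨_, Finset.mem_coe.2 (Finset.mem_image_of_mem _ hyF), fun i hi => ?_⟩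
    linarith [dist_triangle_right (T^[i] y) (T^[i] w) (T^[i] z), hyz i hi, hzw i hi]
  · simp only [Finset.mem_image]
    rintro _ ⟨y, -, rfl⟩
    exact ⟨isOpen_bowenBall hT y m _, isBowenSmall_bowenBall T y m ε⟩

end Compact

/-- The recurrence for the covers below: a block of length `m` in one of `c` sets covering `U`,
or a single step in one of `N` wandering sets. -/
lemma cover_card_recurrence (c N k j : ℕ) {m n : ℕ} (hm : 0 < m) (hn : 0 < n) :
    c * (c ^ k * (N * (n - m) + 1) ^ (j + 1)) + N * (c ^ (k + 1) * (N * (n - 1) + 1) ^ j) ≤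
      c ^ (k + 1) * (N * n + 1) ^ (j + 1) := by
  obtain ⟨n, rfl⟩ : ∃ n', n = n' + 1 := ⟨n - 1, by omega⟩
  set a := N * n + 1
  have ha : N * (n + 1 - m) + 1 ≤ a :=
    Nat.add_le_add_right (Nat.mul_le_mul_left N (by omega)) 1
  have hfirst : c * (c ^ k * (N * (n + 1 - m) + 1) ^ (j + 1)) ≤ c ^ (k + 1) * a ^ (j + 1) := by
    rw [pow_succ' c k, mul_assoc]
    gcongr
  calc _ ≤ c ^ (k + 1) * a ^ (j + 1) + c ^ (k + 1) * (N * a ^ j) :=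
        add_le_add hfirst (le_of_eq (by rw [Nat.add_sub_cancel]; ring))
    _ = c ^ (k + 1) * (a ^ j * (a + N)) := by ring
    _ ≤ c ^ (k + 1) * ((a + N) ^ j * (a + N)) := by gcongr; omega
    _ = c ^ (k + 1) * (N * (n + 1) + 1) ^ (j + 1) := by ring

section Cover

variable {T : X → X} {U : Set X} {m : ℕ} {ε : ℝ} {𝒜 𝒲 : Finset (Set X)}

lemma exists_isBowenSmall_cover_visitCount_lt (hm : 0 < m) (h𝒜 : 𝒜.Nonempty)
    (hU𝒜 : U ⊆ ⋃₀ ↑𝒜) (h𝒜small : ∀ A ∈ 𝒜, IsBowenSmall T m ε A)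
    (hU𝒲 : Uᶜ ⊆ ⋃₀ ↑𝒲) (h𝒲small : ∀ W ∈ 𝒲, IsBowenSmall T 1 ε W) (j n k : ℕ)
    (hnk : n ≤ k * m) :
    ∃ 𝒞 : Finset (Set X), 𝒞.card ≤ 𝒜.card ^ k * (𝒲.card * n + 1) ^ j ∧
      {x | visitCount T Uᶜ x < j} ⊆ ⋃₀ ↑𝒞 ∧ ∀ C ∈ 𝒞, IsBowenSmall T n ε C := by
  classical
  induction j generalizing n k with
  | zero => exact ⟨∅, by simp, fun x hx => absurd hx (by simp), by simp⟩
  | succ j ihj =>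
  induction n using Nat.strong_induction_on generalizing k with
  | _ n ihn =>
  rcases n.eq_zero_or_pos with rfl | hn
  · exact ⟨{univ}, by simpa using Nat.one_le_pow _ _ h𝒜.card_pos, by simp,
      fun _ _ => isBowenSmall_zero⟩
  obtain ⟨k, rfl⟩ : ∃ k', k = k' + 1 := ⟨k - 1, by rcases k with _ | k <;> simp at hnk ⊢; omega⟩
  rw [add_mul, one_mul] at hnk
  obtain ⟨𝒞₁, hcard₁, hcover₁, hsmall₁⟩ := ihn (n - m) (by omega) k (by omega)
  obtain ⟨𝒞₂, hcard₂, hcover₂, hsmall₂⟩ := ihj (n - 1) (k + 1) (by rw [add_mul, one_mul]; omega)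
  refine ⟨coverJoin T m 𝒜 𝒞₁ ∪ coverJoin T 1 𝒲 𝒞₂, ?_, ?_, ?_⟩
  · calc _ ≤ 𝒜.card * 𝒞₁.card + 𝒲.card * 𝒞₂.card :=
          (Finset.card_union_le _ _).trans
            (add_le_add card_coverJoin_le card_coverJoin_le)
      _ ≤ _ := (add_le_add (Nat.mul_le_mul_left _ hcard₁) (Nat.mul_le_mul_left _ hcard₂)).trans
          (cover_card_recurrence _ _ _ _ hm hn)
  · intro x hx
    rw [Finset.coe_union, sUnion_union]
    by_cases hxU : x ∈ U
    · exact Or.inl <| mem_sUnion_coverJoin (hU𝒜 hxU)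
        (hcover₁ ((visitCount_iterate_le m x).trans_lt hx))
    · have h := (visitCount_apply_add_one_le (T := T) (show x ∈ Uᶜ from hxU)).trans_lt hx
      push_cast at h
      exact Or.inr <| mem_sUnion_coverJoin (m := 1) (hU𝒲 hxU)
        (hcover₂ ((ENat.add_lt_add_iff_right ENat.one_ne_top).1 h))
  · intro C hC
    rcases Finset.mem_union.1 hC with hC | hC
    · exact (isBowenSmall_of_mem_coverJoin h𝒜small hsmall₁ C hC).mono_length (by omega)
    · exact (isBowenSmall_of_mem_coverJoin h𝒲small hsmall₂ C hC).mono_length (by omega)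

end Cover

lemma limsup_log_div_le_of_le_pow {s : ℕ → ℕ} {c m N p : ℕ} (hc : 0 < c)
    (hs : ∀ n, s n ≤ c ^ (n / m + 1) * (N * n + 1) ^ p) :
    limsup (fun n : ℕ => ((Real.log (s n) / n : ℝ) : EReal)) atTop ≤
      ((Real.log c / m : ℝ) : EReal) := by
  set g : ℕ → ℝ := fun n =>
    Real.log c / m + (Real.log c + p * Real.log (N + 1)) / n + p * (Real.log n / n)
  have hg : Tendsto g atTop (𝓝 (Real.log c / m)) := by
    simpa using (tendsto_const_nhds.add (tendsto_const_div_atTop_nhds_zero_nat _)).add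
      (Real.tendsto_log_natCast_div_atTop.const_mul (p : ℝ))
  have hle : ∀ᶠ n : ℕ in atTop, Real.log (s n) / n ≤ g n := by
    filter_upwards [eventually_gt_atTop 0] with n hn
    have hnR : (1 : ℝ) ≤ n := by exact_mod_cast hn
    have hlogc : 0 ≤ Real.log c := Real.log_natCast_nonneg c
    have hpoly : Real.log (N * n + 1) ≤ Real.log (N + 1) + Real.log n := by
      rw [← Real.log_mul (by positivity) (by positivity)]
      exact Real.log_le_log (by positivity) (by nlinarith)
    have hdiv : ((n / m : ℕ) : ℝ) ≤ n / m := Nat.cast_div_le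
    have hgn :
        g n * n = n / m * Real.log c + Real.log c + p * (Real.log (N + 1) + Real.log n) := by
      simp only [g]
      field_simp
      ring
    rw [div_le_iff₀ (by positivity), hgn]
    calc Real.log (s n) ≤ Real.log ↑(c ^ (n / m + 1) * (N * n + 1) ^ p) :=
          Real.log_natCast_le_log_natCast (hs n)
      _ = ((n / m : ℕ) + 1) * Real.log c + p * Real.log (N * n + 1) := by
          push_cast
          rw [Real.log_mul (by positivity) (by positivity), Real.log_pow, Real.log_pow]
          push_cast
          ring
      _ ≤ (n / m + 1) * Real.log c + p * (Real.log (N + 1) + Real.log n) := by gcongr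
      _ = _ := by ring
  calc limsup (fun n : ℕ => ((Real.log (s n) / n : ℝ) : EReal)) atTop
      ≤ limsup (fun n => (g n : EReal)) atTop :=
        limsup_le_limsup (hle.mono fun n h => EReal.coe_le_coe_iff.2 h)
    _ = _ := (EReal.tendsto_coe.2 hg).limsup_eq

section Entropy

variable [CompactSpace X] {T : X → X} {Z : Set X} {ε : ℝ} {m : ℕ}

lemma exists_sepNum_univ_le (hT : Continuous T) (hZ : Z.Nonempty)
    (hΩ : nonwanderingSet T ⊆ closure Z) (hε : 0 < ε) (hm : 0 < m) :
    ∃ N : ℕ, ∀ n,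
      sepNum T univ n ε ≤ sepNum T Z m (ε / 4) ^ (n / m + 1) * (N * n + 1) ^ (N + 1) := by
  obtain ⟨𝒜, h𝒜, h𝒜card, hZ𝒜, h𝒜U⟩ := exists_isBowenSmall_cover_closure hT hZ m hε
  set U := ⋃₀ (𝒜 : Set (Set X))
  have hUo : IsOpen U := isOpen_sUnion fun A hA => (h𝒜U A hA).1
  obtain ⟨𝒲, hU𝒲, h𝒲⟩ := exists_isWandering_cover hT hε hUo.isClosed_compl.isCompact
    (disjoint_compl_left_iff_subset.2 (hΩ.trans hZ𝒜))
  refine ⟨𝒲.card, fun n => ?_⟩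
  obtain ⟨𝒞, hcard, hcover, hsmall⟩ := exists_isBowenSmall_cover_visitCount_lt hm h𝒜 subset_rfl
    (fun A hA => (h𝒜U A hA).2) hU𝒲 (fun W hW => (h𝒲 W hW).2) (𝒲.card + 1) n (n / m + 1)
    (by rw [add_mul, one_mul]; exact (Nat.lt_div_mul_add hm).le)
  have hvisits : univ ⊆ {x | visitCount T Uᶜ x < ↑(𝒲.card + 1)} := fun x _ =>
    (visitCount_le_card hU𝒲 (fun W hW => (h𝒲 W hW).1) x).trans_lt
      (by exact_mod_cast Nat.lt_succ_self _)
  calc sepNum T univ n ε ≤ 𝒞.card :=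
        sepNum_le_card_of_isBowenSmall hT hε (hvisits.trans hcover) hsmall
    _ ≤ _ := hcard.trans (Nat.mul_le_mul_right _ (Nat.pow_le_pow_left h𝒜card _))

lemma limsup_log_sepNum_univ_le (hT : Continuous T) (hZ : Z.Nonempty)
    (hΩ : nonwanderingSet T ⊆ closure Z) (hε : 0 < ε) (hm : 0 < m) :
    limsup (fun n : ℕ => ((Real.log (sepNum T univ n ε) / n : ℝ) : EReal)) atTop ≤
      ((Real.log (sepNum T Z m (ε / 4)) / m : ℝ) : EReal) := by
  obtain ⟨N, hN⟩ := exists_sepNum_univ_le hT hZ hΩ hε hm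
  exact limsup_log_div_le_of_le_pow (sepNum_pos hT hZ (by linarith)) hN

end Entropy

/-- If `X` is a compact metric space, `T` continuous, and `Z` a nonempty
set whose closure contains the non-wandering set, then the upper capacity entropy of `T`
on `Z` equals the topological entropy of `(X,T)`. -/
theorem uc_entropy_of_nonwandering_subset_closure [CompactSpace X]
    (T : X → X) (hT : Continuous T) (Z : Set X) (hZ : Z.Nonempty)
    (hΩ : {x : X | ∀ U : Set X, IsOpen U → x ∈ U → ∃ k : ℕ, 1 ≤ k ∧ ∃ y ∈ U, T^[k] y ∈ U}
      ⊆ closure Z) :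
    ucEntropy T Z = ucEntropy T Set.univ := by
  refine le_antisymm (ucEntropy_mono hT (subset_univ Z)) (iSup₂_le fun ε hε => ?_)
  set b : ℕ → EReal := fun m => ((Real.log (sepNum T Z m (ε / 4)) / m : ℝ) : EReal)
  calc limsup (fun n : ℕ => ((Real.log (sepNum T univ n ε) / n : ℝ) : EReal)) atTop
      ≤ liminf b atTop := le_liminf_of_le (by isBoundedDefault) <|
        (eventually_gt_atTop 0).mono fun m hm => limsup_log_sepNum_univ_le hT hZ hΩ hε hm
    _ ≤ limsup b atTop := liminf_le_limsup
    _ ≤ ucEntropy T Z := le_iSup₂_of_le (ε / 4) (by linarith) le_rfl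
end

section
/- Let (X,T) be a topological dynamical system and suppose f: X → ℝ is continuous such that the unique f-maximizing measure is the point mass at a periodic orbit orb(x₀,T). Then the set S_f^{MR} of initial points of measure-recurrent f-optimal orbits equals ⋃_{i=0}^∞ T^{-i}(orb(x₀,T)), and in particular the upper capacity topological entropy of T on S_f^{MR} is 0 when T is invertible (so that each T^{-i}orb(x₀,T) is finite) — more precisely, h_top^{UC}(T, S_f^{MR}) = 0 whenever S_f^{MR} is a countable union of preimages of a single periodic orbit under a homeomorphism T. -/
open Filter MeasureTheory Topology
open scoped ENNReal

variable {X : Type*} [MetricSpace X]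


variable [MeasurableSpace X] [BorelSpace X]

/-- A probability measure is invariant under `T`. -/
def InvariantProb (T : X → X) (μ : MeasureTheory.ProbabilityMeasure X) : Prop :=
  μ.toMeasure.map T = μ.toMeasure

/-- The `n`-th empirical measure of `x`: the average of Dirac masses along the orbit
segment `x, Tx, …, T^n x` (of length `n+1`, so that it is defined for every `n`). -/
noncomputable def empirical (T : X → X) (x : X) (n : ℕ) :
    MeasureTheory.ProbabilityMeasure X :=
  ⟨((n + 1 : ℝ≥0∞))⁻¹ • ∑ j ∈ Finset.range (n + 1), MeasureTheory.Measure.dirac (T^[j] x), by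
    constructor
    simp [MeasureTheory.Measure.smul_apply, smul_eq_mul]
    rw [ENNReal.inv_mul_cancel] <;> simp⟩

/-- The set `M_x` of weak* limit points of the empirical measures of `x`. -/
def limitMeasures (T : X → X) (x : X) : Set (MeasureTheory.ProbabilityMeasure X) :=
  {μ | MapClusterPt μ Filter.atTop (fun n => empirical T x n)}

/-- The saturated set `G_K = {x : M_x = K}`. -/
def saturated (T : X → X) (K : Set (MeasureTheory.ProbabilityMeasure X)) : Set X :=
  {x | limitMeasures T x = K}

/-- The support of a probability measure. -/
def measSupp (μ : MeasureTheory.ProbabilityMeasure X) : Set X :=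
  {x | ∀ U : Set X, IsOpen U → x ∈ U → 0 < μ.toMeasure U}

/-- The measure center: the closure of the union of supports of invariant measures. -/
noncomputable def measureCenter (T : X → X) : Set X :=
  closure (⋃ (μ : MeasureTheory.ProbabilityMeasure X) (_ : InvariantProb T μ), measSupp μ)

/-- `β(f)`: the supremum of `∫ f dμ` over invariant probability measures. -/
noncomputable def birkhoffSup (T : X → X) (f : X → ℝ) : ℝ :=
  sSup {r : ℝ | ∃ ν : MeasureTheory.ProbabilityMeasure X,
    InvariantProb T ν ∧ r = ∫ x, f x ∂ν.toMeasure}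

/-- The set of initial values of measure-recurrent `f`-optimal orbits: points whose
empirical measures converge to an invariant measure in whose support they lie, and whose
Birkhoff averages of `f` converge to `β(f)`. -/
def mrOptimal (T : X → X) (f : X → ℝ) : Set X :=
  {x | (∃ μ : MeasureTheory.ProbabilityMeasure X,
          Filter.Tendsto (fun n => empirical T x n) Filter.atTop (nhds μ) ∧ x ∈ measSupp μ) ∧
    Filter.Tendsto (fun n => (∑ i ∈ Finset.range n, f (T^[i] x)) / n)
      Filter.atTop (nhds (birkhoffSup T f))}

/-!
A measure-recurrent optimal point `x` has empirical measures converging to some `ν` in whose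
support it lies. The limit `ν` is invariant, since pushing an empirical measure forward by `T`
only shifts the orbit segment by one step, and `∫ f dν = β(f)`, since the Birkhoff averages of
the continuous `f` are the integrals against the empirical measures. By uniqueness `ν` is the
periodic orbit measure, which lives on the finite, hence closed, orbit; so `x` is on the orbit.
Conversely, an orbit point is periodic, so its empirical measures converge (Cesàro) to the orbit
measure, and it lies in that measure's support. As `T` is injective the orbit is its own
preimage, so the union of preimages is the orbit itself, and a finite set has zero capacity
entropy because its separated sets have bounded cardinality.
-/

theorem Function.IsPeriodicPt.birkhoffSum_add_period {α M : Type*} [AddCommMonoid M]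
    {f : α → α} {p : ℕ} {x : α} (h : IsPeriodicPt f p x) (g : α → M) (n : ℕ) :
    birkhoffSum f g (n + p) x = birkhoffSum f g n x + birkhoffSum f g p x := by
  rw [add_comm n, birkhoffSum_add, h.eq, add_comm]

theorem Function.IsPeriodicPt.tendsto_birkhoffAverage {α E : Type*} (𝕜 : Type*) [RCLike 𝕜]
    [NormedAddCommGroup E] [NormedSpace 𝕜 E] {f : α → α} {p : ℕ} {x : α}
    (h : IsPeriodicPt f p x) (hp : 0 < p) (g : α → E) :
    Tendsto (birkhoffAverage 𝕜 f g · x) atTop (𝓝 (birkhoffAverage 𝕜 f g p x)) := by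
  set c := birkhoffAverage 𝕜 f g p x
  have hpc : (p : 𝕜) • c = birkhoffSum f g p x := by
    have : (p : 𝕜) ≠ 0 := Nat.cast_ne_zero.2 hp.ne'
    simp only [c, birkhoffAverage, smul_smul, mul_inv_cancel₀ this, one_smul]
  -- the deviation of the Birkhoff sum from linear growth is `p`-periodic, hence bounded
  set r : ℕ → E := fun n ↦ birkhoffSum f g n x - (n : 𝕜) • c
  have hr : Function.Periodic r p := fun n ↦ by
    simp only [r, h.birkhoffSum_add_period, Nat.cast_add, add_smul, hpc]
    abel
  have hbdd : IsBoundedUnder (· ≤ ·) atTop (norm ∘ r) := by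
    refine isBoundedUnder_of
      ⟨(Finset.range p).sup' (Finset.nonempty_range_iff.2 hp.ne') (‖r ·‖), fun n ↦ ?_⟩
    rw [Function.comp_apply, ← hr.map_mod_nat n]
    exact Finset.le_sup' (‖r ·‖) (Finset.mem_range.2 (Nat.mod_lt n hp))
  have hlim := (tendsto_inv_atTop_nhds_zero_nat (𝕜 := 𝕜)).zero_smul_isBoundedUnder_le hbdd
  rw [← add_zero c]
  refine (hlim.const_add c).congr' ?_
  filter_upwards [eventually_ne_atTop 0] with n hn
  have : (n : 𝕜) ≠ 0 := Nat.cast_ne_zero.2 hn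
  simp only [r, birkhoffAverage, smul_sub, smul_smul, inv_mul_cancel₀ this, one_smul]
  abel

section Empirical

variable {α : Type*} [MeasurableSpace α] {T : α → α} {x : α} {n : ℕ}

theorem empirical_toMeasure (T : α → α) (x : α) (n : ℕ) :
    (empirical T x n).toMeasure
      = ((n + 1 : ℕ) : ℝ≥0∞)⁻¹ • ∑ j ∈ Finset.range (n + 1), Measure.dirac (T^[j] x) := by
  simp [empirical]

theorem empirical_apply_of_isPeriodicPt (h : Function.IsPeriodicPt T (n + 1) x) :
    empirical T (T x) n = empirical T x n := by
  have hsum : ∑ j ∈ Finset.range (n + 1), Measure.dirac (T^[j] (T x))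
      = ∑ j ∈ Finset.range (n + 1), Measure.dirac (T^[j] x) := by
    simp_rw [← Function.iterate_succ_apply]
    rw [Finset.sum_range_succ, Finset.sum_range_succ' _ n, h.eq, Function.iterate_zero_apply]
  apply ProbabilityMeasure.toMeasure_injective
  rw [empirical_toMeasure, empirical_toMeasure, hsum]

theorem empirical_iterate_of_isPeriodicPt (h : Function.IsPeriodicPt T (n + 1) x) (k : ℕ) :
    empirical T (T^[k] x) n = empirical T x n := by
  induction k with
  | zero => rfl
  | succ k ih =>
    rw [Function.iterate_succ_apply', empirical_apply_of_isPeriodicPt (h.apply_iterate k), ih]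

theorem map_empirical (hT : Measurable T) (x : α) (n : ℕ) :
    (empirical T x n).toMeasure.map T = (empirical T (T x) n).toMeasure := by
  simp only [empirical_toMeasure, Measure.map_smul,
    Measure.map_finset_sum hT.aemeasurable, Measure.map_dirac' hT, Function.iterate_succ_apply',
    ← Function.iterate_succ_apply]

theorem invariantProb_empirical_of_isPeriodicPt (hT : Measurable T)
    (h : Function.IsPeriodicPt T (n + 1) x) : InvariantProb T (empirical T x n) := by
  rw [InvariantProb, map_empirical hT, empirical_apply_of_isPeriodicPt h]

variable [MeasurableSingletonClass α]

theorem integral_empirical (g : α → ℝ) (T : α → α) (x : α) (n : ℕ) :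
    ∫ y, g y ∂(empirical T x n).toMeasure = birkhoffAverage ℝ T g (n + 1) x := by
  rw [empirical_toMeasure, integral_smul_measure,
    integral_finsetSum_measure fun j _ ↦ integrable_dirac enorm_lt_top]
  simp [birkhoffAverage, birkhoffSum, integral_dirac, ENNReal.toReal_add]

end Empirical

section WeakLimits

variable {α : Type*} [MeasurableSpace α] [TopologicalSpace α] [OpensMeasurableSpace α]
  [MeasurableSingletonClass α] {T : α → α} {x : α}

theorem tendsto_empirical_of_isPeriodicPt {n : ℕ} (h : Function.IsPeriodicPt T (n + 1) x) :
    Tendsto (empirical T x ·) atTop (𝓝 (empirical T x n)) := by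
  refine ProbabilityMeasure.tendsto_iff_forall_integral_tendsto.2 fun g ↦ ?_
  simp only [integral_empirical]
  exact (h.tendsto_birkhoffAverage ℝ n.succ_pos g).comp (tendsto_add_atTop_nat 1)

theorem tendsto_empirical_apply_of_tendsto {ν : ProbabilityMeasure α}
    (hν : Tendsto (empirical T x ·) atTop (𝓝 ν)) :
    Tendsto (empirical T (T x) ·) atTop (𝓝 ν) := by
  rw [ProbabilityMeasure.tendsto_iff_forall_integral_tendsto] at hν ⊢
  intro g
  have hshift := (tendsto_birkhoffAverage_apply_sub_birkhoffAverage' ℝ g.isBounded_range T x).comp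
    (tendsto_add_atTop_nat 1)
  simpa [integral_empirical] using hshift.add (hν g)

theorem integral_eq_of_tendsto_empirical [CompactSpace α] {f : α → ℝ} (hf : Continuous f)
    {ν : ProbabilityMeasure α} (hν : Tendsto (empirical T x ·) atTop (𝓝 ν)) {c : ℝ}
    (hc : Tendsto (birkhoffAverage ℝ T f · x) atTop (𝓝 c)) :
    ∫ y, f y ∂ν.toMeasure = c := by
  have hint := ((ProbabilityMeasure.continuous_integral_continuousMap
    (⟨f, hf⟩ : C(α, ℝ))).tendsto ν).comp hν
  simp only [Function.comp_def, ContinuousMap.coe_mk, integral_empirical] at hint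
  exact tendsto_nhds_unique hint (hc.comp (tendsto_add_atTop_nat 1))

end WeakLimits

section MetricSpace

variable {T : X → X} {x : X}

theorem invariantProb_of_tendsto_empirical (hT : Continuous T) {ν : ProbabilityMeasure X}
    (hν : Tendsto (empirical T x ·) atTop (𝓝 ν)) : InvariantProb T ν := by
  have hmap := ProbabilityMeasure.tendsto_map_of_tendsto_of_continuous _ _ hν hT
  have hshift :
      Tendsto (fun n ↦ (empirical T x n).map hT.measurable.aemeasurable) atTop (𝓝 ν) := by
    refine (tendsto_empirical_apply_of_tendsto hν).congr fun n ↦ ?_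
    exact ProbabilityMeasure.toMeasure_injective (map_empirical hT.measurable x n).symm
  exact congrArg ProbabilityMeasure.toMeasure (tendsto_nhds_unique hmap hshift)

theorem self_mem_measSupp_empirical (T : X → X) (x : X) (n : ℕ) :
    x ∈ measSupp (empirical T x n) := by
  intro U hU hxU
  rw [empirical_toMeasure, Measure.smul_apply, Measure.finsetSum_apply, smul_eq_mul]
  refine ENNReal.mul_pos (by simp) fun hsum ↦ ?_
  have hx := Finset.sum_eq_zero_iff.1 hsum 0 (Finset.mem_range.2 n.succ_pos)
  simp [Measure.dirac_apply' _ hU.measurableSet, hxU] at hx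

theorem mem_of_mem_measSupp {α : Type*} [MetricSpace α] [MeasurableSpace α] {x : α}
    {μ : ProbabilityMeasure α} {C : Set α} (hx : x ∈ measSupp μ)
    (hC : IsClosed C) (hμC : μ.toMeasure Cᶜ = 0) : x ∈ C := by
  by_contra hxC
  exact (hx Cᶜ hC.isOpen_compl hxC).ne' hμC

end MetricSpace

theorem Set.iUnion_preimage_iterate_eq_self {α : Type*} {f : α → α} {s : Set α}
    (h : f ⁻¹' s ⊆ s) : ⋃ n, f^[n] ⁻¹' s = s := by
  refine subset_antisymm (Set.iUnion_subset fun n ↦ ?_) (Set.subset_iUnion_of_subset 0 subset_rfl)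
  induction n with
  | zero => exact subset_rfl
  | succ n ih =>
    rw [Function.iterate_succ', Set.preimage_comp]
    exact (Set.preimage_mono h).trans ih

theorem Function.IsPeriodicPt.preimage_orbit_subset {α : Type*} {f : α → α} {p : ℕ} {x : α}
    (hf : f.Injective) (h : IsPeriodicPt f p x) :
    f ⁻¹' {y | ∃ j < p, f^[j] x = y} ⊆ {y | ∃ j < p, f^[j] x = y} := by
  rintro y ⟨j, hj, hjy⟩
  cases j with
  | zero =>
    obtain ⟨m, rfl⟩ := Nat.exists_eq_add_one_of_ne_zero hj.ne'
    refine ⟨m, m.lt_succ_self, hf ?_⟩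
    rw [← Function.iterate_succ_apply' f, h.eq, ← hjy, Function.iterate_zero_apply]
  | succ j =>
    exact ⟨j, by omega, hf (by rw [← Function.iterate_succ_apply' f, hjy])⟩

theorem sum_dirac_iterate_compl {α : Type*} [MeasurableSpace α] [MeasurableSingletonClass α]
    (T : α → α) (x : α) (p : ℕ) :
    (∑ j ∈ Finset.range p, Measure.dirac (T^[j] x)) {y | ∃ j < p, T^[j] x = y}ᶜ = 0 := by
  rw [Measure.finsetSum_apply]
  refine Finset.sum_eq_zero fun j hj ↦ ?_
  rw [Measure.dirac_apply, Set.indicator_of_notMem]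
  exact Set.notMem_compl_iff.2 ⟨j, Finset.mem_range.1 hj, rfl⟩

section Entropy

variable {Y : Type*} [MetricSpace Y] (T : Y → Y) {Z : Set Y}

theorem sepNum_le_ncard (hZ : Z.Finite) (n : ℕ) (ε : ℝ) : sepNum T Z n ε ≤ Z.ncard :=
  csSup_le' fun _ ⟨E, hEZ, _, hE⟩ ↦ hE ▸ (Set.ncard_coe_finset E).symm.trans_le
    (Set.ncard_le_ncard hEZ hZ)

theorem tendsto_log_sepNum_div_of_finite (hZ : Z.Finite) (ε : ℝ) :
    Tendsto (fun n : ℕ ↦ Real.log (sepNum T Z n ε) / n) atTop (𝓝 0) := by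
  refine squeeze_zero (fun n ↦ div_nonneg (Real.log_natCast_nonneg _) n.cast_nonneg) (fun n ↦ ?_)
    (tendsto_const_div_atTop_nhds_zero_nat (Z.ncard : ℝ))
  gcongr
  calc Real.log (sepNum T Z n ε) ≤ sepNum T Z n ε := Real.log_le_self (Nat.cast_nonneg _)
    _ ≤ Z.ncard := by exact_mod_cast sepNum_le_ncard T hZ n ε

theorem ucEntropy_eq_zero_of_finite (hZ : Z.Finite) : ucEntropy T Z = 0 := by
  have hlim (ε : ℝ) :
      limsup (fun n : ℕ ↦ ((Real.log (sepNum T Z n ε) / n : ℝ) : EReal)) atTop = 0 :=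
    ((continuous_coe_real_ereal.tendsto 0).comp
      (tendsto_log_sepNum_div_of_finite T hZ ε)).limsup_eq
  simp only [ucEntropy, hlim]
  exact le_antisymm (iSup₂_le fun _ _ ↦ le_rfl) (le_iSup₂_of_le 1 one_pos le_rfl)

end Entropy

section MrOptimal

variable {T : X → X} {f : X → ℝ} {x : X}

theorem mem_mrOptimal_iff : x ∈ mrOptimal T f ↔
    (∃ μ : ProbabilityMeasure X, Tendsto (empirical T x ·) atTop (𝓝 μ) ∧ x ∈ measSupp μ) ∧
      Tendsto (birkhoffAverage ℝ T f · x) atTop (𝓝 (birkhoffSup T f)) := by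
  simp only [birkhoffAverage, birkhoffSum, smul_eq_mul, ← div_eq_inv_mul]
  rfl

theorem mem_mrOptimal_of_isPeriodicPt {n : ℕ} (h : Function.IsPeriodicPt T (n + 1) x)
    (hβ : ∫ y, f y ∂(empirical T x n).toMeasure = birkhoffSup T f) : x ∈ mrOptimal T f := by
  refine mem_mrOptimal_iff.2
    ⟨⟨_, tendsto_empirical_of_isPeriodicPt h, self_mem_measSupp_empirical T x n⟩, ?_⟩
  rw [← hβ, integral_empirical]
  exact h.tendsto_birkhoffAverage ℝ n.succ_pos f

theorem mrOptimal_subset_of_forall_maximizing [CompactSpace X] (hT : Continuous T)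
    (hf : Continuous f) {C : Set X} (hC : IsClosed C)
    (hmax : ∀ μ : ProbabilityMeasure X, InvariantProb T μ →
      ∫ y, f y ∂μ.toMeasure = birkhoffSup T f → μ.toMeasure Cᶜ = 0) :
    mrOptimal T f ⊆ C := by
  intro x hx
  obtain ⟨⟨ν, hν, hxν⟩, havg⟩ := mem_mrOptimal_iff.1 hx
  exact mem_of_mem_measSupp hxν hC <| hmax ν (invariantProb_of_tendsto_empirical hT hν)
    (integral_eq_of_tendsto_empirical hf hν havg)

end MrOptimal

theorem mrOptimal_eq_preimages_of_periodic_maximizing_general [CompactSpace X]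
    (T : X → X) (hT : Continuous T) (hTbij : Function.Bijective T)
    (f : X → ℝ) (hf : Continuous f)
    (x₀ : X) (p : ℕ) (hper : T^[p] x₀ = x₀)
    (hmax : ∀ μ : ProbabilityMeasure X, InvariantProb T μ →
      ((∫ x, f x ∂μ.toMeasure = birkhoffSup T f) ↔
        μ.toMeasure
          = (p : ℝ≥0∞)⁻¹ • ∑ i ∈ Finset.range p, Measure.dirac (T^[i] x₀))) :
    mrOptimal T f = (⋃ i : ℕ, T^[i] ⁻¹' {y : X | ∃ j < p, T^[j] x₀ = y}) ∧
      ucEntropy T (mrOptimal T f) = 0 := by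
  have horbit : {y : X | ∃ j < p, T^[j] x₀ = y}.Finite := (Set.finite_lt_nat p).image _
  have hmr : mrOptimal T f = {y : X | ∃ j < p, T^[j] x₀ = y} := by
    refine subset_antisymm (mrOptimal_subset_of_forall_maximizing hT hf horbit.isClosed
      fun μ hμ hμf ↦ ?_) ?_
    · rw [(hmax μ hμ).1 hμf, Measure.smul_apply, sum_dirac_iterate_compl, smul_zero]
    · rintro _ ⟨k, hk, rfl⟩
      obtain ⟨n, rfl⟩ := Nat.exists_eq_add_one_of_ne_zero (Nat.ne_zero_of_lt hk)
      refine mem_mrOptimal_of_isPeriodicPt (Function.IsPeriodicPt.apply_iterate hper k) ?_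
      rw [empirical_iterate_of_isPeriodicPt hper]
      exact (hmax _ (invariantProb_empirical_of_isPeriodicPt hT.measurable hper)).2
        (empirical_toMeasure T x₀ n)
  rw [hmr, Set.iUnion_preimage_iterate_eq_self
    (Function.IsPeriodicPt.preimage_orbit_subset hTbij.injective hper)]
  exact ⟨rfl, ucEntropy_eq_zero_of_finite T horbit⟩

/-- If the unique `f`-maximizing measure is the periodic-orbit measure
of a periodic point `x₀` of period `p` and `T` is invertible, then the set of initial
points of measure-recurrent `f`-optimal orbits is `⋃_{i≥0} T^{-i}(orb(x₀,T))`, and its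
upper capacity entropy vanishes. -/
theorem mrOptimal_eq_preimages_of_periodic_maximizing [CompactSpace X]
    (T : X → X) (hT : Continuous T) (hTbij : Function.Bijective T)
    (f : X → ℝ) (hf : Continuous f)
    (x₀ : X) (p : ℕ) (hp : 1 ≤ p) (hper : T^[p] x₀ = x₀)
    (hmax : ∀ μ : ProbabilityMeasure X, InvariantProb T μ →
      ((∫ x, f x ∂μ.toMeasure = birkhoffSup T f) ↔
        μ.toMeasure
          = (p : ℝ≥0∞)⁻¹ • ∑ i ∈ Finset.range p, Measure.dirac (T^[i] x₀))) :
    mrOptimal T f = (⋃ i : ℕ, T^[i] ⁻¹' {y : X | ∃ j < p, T^[j] x₀ = y}) ∧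
      ucEntropy T (mrOptimal T f) = 0 :=
  mrOptimal_eq_preimages_of_periodic_maximizing_general T hT hTbij f hf x₀ p hper hmax
end
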